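/- arXiv:2004.08954 — 5 statements merged into one kernel-verified Lean document; each statement's English description precedes it below -/
import Mathlib

section
/- For every prime p ≥ 3, integers s ≥ 1, n ≥ 0, and every integer b with 0 ≤ b < p(n+1), one has |M_{p,s,n}(b) − Σ_{p,s,n,b}/(n+1)| ≤ p^{s(n+1)/2}, where Σ_{p,s,n,b} = (p−1)·p^{s(n+1)−1} if p divides b, and Σ_{p,s,n,b} = −p^{s(n+1)−1} otherwise. -/
open Polynomial Finset

/-- The polynomial `T_{p,s,n}(q) = ∏_{j=0}^n ∏_{k=1}^{p-1} (1 - q^{pj+k})^s`. -/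
noncomputable def borweinPoly (p s n : ℕ) : Polynomial ℤ :=
  ∏ j ∈ Finset.range (n + 1), ∏ k ∈ Finset.Icc 1 (p - 1),
    (1 - Polynomial.X ^ (p * j + k)) ^ s

/-- The coefficient `t_{i,p,s}` of `q^i` in `T_{p,s,n}(q)`. -/
noncomputable def borweinCoeff (p s n i : ℕ) : ℤ := (borweinPoly p s n).coeff i

/-- The degree `d_{p,s,n} = p(p-1)s(n+1)^2/2` of `T_{p,s,n}`. -/
def borweinDeg (p s n : ℕ) : ℕ := p * (p - 1) * s * (n + 1) ^ 2 / 2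

/-- `M_{p,s,n}(b) = ∑_{ℓ ≥ 0} t_{b + ℓ·p(n+1), p, s}`, a finite sum since the
coefficients vanish beyond the degree `d_{p,s,n}`. -/
noncomputable def borweinM (p s n b : ℕ) : ℤ :=
  ∑ l ∈ Finset.range (borweinDeg p s n + 1), borweinCoeff p s n (b + l * (p * (n + 1)))

/-
With `N = p(n+1)`, the polynomial `T_{p,s,n}` is `S^s` for `S(q) = ∏_{m<N, p∤m} (1 - q^m)`, and
the roots-of-unity filter gives `N·M(b) = ∑_{a<N} ζ^{-ab} T(ζ^a)` for a primitive `N`-th root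
of unity `ζ`. If `z` has order `d ∣ N`, the factors of `S(z)` repeat with period `d`, and
`∏_{0<m<d} (1 - z^m) = d` gives `S(z) = p^{N/d}` when `p ∣ d`, while `S(z) = 0` when `p ∤ d`
(the factor `m = d` vanishes). The `p - 1` values `ζ^a` of order `p` contribute the Ramanujan sum
`c_p(b)·p^{s(n+1)} = p·Σ_{p,s,n,b}`; each remaining term is `0` or has `p ∣ d` and `d ≥ 2p`,
hence modulus at most `p^{s(n+1)/2}`. Dividing by `N` gives the bound.
-/

section BlockProducts

variable {M : Type*} [CommMonoid M]

@[to_additive sum_range_mul_eq_sum_sum]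
theorem prod_range_mul_eq_prod_prod (f : ℕ → M) (a t : ℕ) :
    ∏ m ∈ range (a * t), f m = ∏ j ∈ range t, ∏ r ∈ range a, f (a * j + r) := by
  induction t with
  | zero => simp
  | succ t ih => rw [Nat.mul_succ, prod_range_add, ih, prod_range_succ]

theorem prod_range_mul_of_periodic {f : ℕ → M} {d : ℕ}
    (hf : Function.Periodic f d) (t : ℕ) :
    ∏ m ∈ range (d * t), f m = (∏ m ∈ range d, f m) ^ t := by
  rw [prod_range_mul_eq_prod_prod, pow_eq_prod_const]
  refine prod_congr rfl fun j _ => prod_congr rfl fun r _ => ?_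
  rw [add_comm, mul_comm]
  exact hf.nat_mul j r

theorem Nat.not_dvd_mul_add {p r : ℕ} (hr0 : 0 < r) (hrp : r < p) (j : ℕ) : ¬p ∣ p * j + r :=
  fun h => Nat.not_dvd_of_pos_of_lt hr0 hrp ((Nat.dvd_add_right (dvd_mul_right p j)).1 h)

@[to_additive sum_range_mul_filter_dvd]
theorem prod_range_mul_filter_dvd (f : ℕ → M) {p : ℕ} (hp : 0 < p) (t : ℕ) :
    ∏ m ∈ range (p * t) with p ∣ m, f m = ∏ j ∈ range t, f (p * j) := by
  rw [prod_filter, prod_range_mul_eq_prod_prod]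
  refine prod_congr rfl fun j _ => ?_
  rw [prod_eq_single 0 (fun r hr hr0 => ?_) (by simp [hp]), if_pos (by simp), add_zero]
  exact if_neg (Nat.not_dvd_mul_add (Nat.pos_of_ne_zero hr0) (mem_range.1 hr) j)

theorem prod_range_mul_filter_not_dvd (f : ℕ → M) (p t : ℕ) :
    ∏ m ∈ range (p * t) with ¬p ∣ m, f m =
      ∏ j ∈ range t, ∏ k ∈ Icc 1 (p - 1), f (p * j + k) := by
  rw [prod_filter, prod_range_mul_eq_prod_prod]
  refine prod_congr rfl fun j _ => ?_
  calc ∏ r ∈ range p, (if ¬p ∣ p * j + r then f (p * j + r) else 1)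
      = ∏ k ∈ Icc 1 (p - 1), (if ¬p ∣ p * j + k then f (p * j + k) else 1) := by
        refine (prod_subset (fun k hk => ?_) fun r hr hr' => ?_).symm
        · simp only [mem_Icc, mem_range] at hk ⊢; omega
        · simp only [mem_Icc, mem_range] at hr hr'
          obtain rfl : r = 0 := by omega
          simp
    _ = ∏ k ∈ Icc 1 (p - 1), f (p * j + k) :=
        prod_congr rfl fun k hk => if_pos (Nat.not_dvd_mul_add (mem_Icc.1 hk).1 (by grind) j)

end BlockProducts

section RootsOfUnity

variable {K : Type*} [Field K] {N : ℕ} {ζ : K}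

theorem IsPrimitiveRoot.sum_pow_pow_eq_ite (hζ : IsPrimitiveRoot ζ N) (m : ℕ) :
    ∑ a ∈ range N, (ζ ^ m) ^ a = if N ∣ m then (N : K) else 0 := by
  split_ifs with h
  · obtain ⟨t, rfl⟩ := h
    simp [pow_mul, hζ.pow_eq_one]
  · have hne : ζ ^ m ≠ 1 := fun h1 => h (hζ.dvd_of_pow_eq_one m h1)
    rw [geom_sum_eq hne, ← pow_mul, mul_comm, pow_mul, hζ.pow_eq_one, one_pow, sub_self,
      zero_div]

theorem Nat.dvd_sub_add_iff {N b r : ℕ} (hb : b < N) (hr : r < N) :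
    N ∣ N - b + r ↔ b = r := by
  refine ⟨fun ⟨k, hk⟩ => ?_, by rintro rfl; rw [Nat.sub_add_cancel hb.le]⟩
  have : N - b + r < N * 2 := by omega
  rcases k with _ | _ | k
  · omega
  · omega
  · nlinarith

theorem IsPrimitiveRoot.mul_sum_coeff_add_mul (hζ : IsPrimitiveRoot ζ N) {f : K[X]} {b L : ℕ}
    (hb : b < N) (hf : f.natDegree < N * L) :
    (N : K) * ∑ l ∈ range L, f.coeff (b + l * N) =
      ∑ a ∈ range N, ζ ^ ((N - b) * a) * f.eval (ζ ^ a) := by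
  calc (N : K) * ∑ l ∈ range L, f.coeff (b + l * N)
      = ∑ l ∈ range L, ∑ r ∈ range N,
          f.coeff (N * l + r) * if b = r then (N : K) else 0 := by
        rw [mul_sum]
        refine sum_congr rfl fun l _ => ?_
        simp only [mul_ite, mul_zero, sum_ite_eq, mem_range, if_pos hb]
        ring_nf
    _ = ∑ i ∈ range (N * L), f.coeff i * ∑ a ∈ range N, (ζ ^ (N - b + i)) ^ a := by
        rw [sum_range_mul_eq_sum_sum]
        refine sum_congr rfl fun l _ => sum_congr rfl fun r hr => ?_
        simp only [hζ.sum_pow_pow_eq_ite, add_left_comm _ (N * l),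
          Nat.dvd_add_right (dvd_mul_right N l),          Nat.dvd_sub_add_iff hb (mem_range.1 hr)]
    _ = ∑ a ∈ range N, ζ ^ ((N - b) * a) * f.eval (ζ ^ a) := by
        simp only [eval_eq_sum_range' hf, mul_sum]
        rw [sum_comm]
        refine sum_congr rfl fun i _ => sum_congr rfl fun a _ => ?_
        ring

theorem IsPrimitiveRoot.prod_range_ite_one_sub_pow (hζ : IsPrimitiveRoot ζ N) (hN : 0 < N) :
    ∏ m ∈ range N, (if m = 0 then 1 else 1 - ζ ^ m) = N := by
  obtain ⟨k, rfl⟩ := Nat.exists_eq_add_one_of_ne_zero hN.ne'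
  simp [prod_range_succ', hζ.prod_one_sub_pow_eq_order]

variable [CharZero K]

theorem IsPrimitiveRoot.prod_filter_not_dvd_one_sub_pow {p e : ℕ}
    (hζ : IsPrimitiveRoot ζ (p * e)) (hpe : 0 < p * e) :
    ∏ m ∈ range (p * e) with ¬p ∣ m, (1 - ζ ^ m) = p := by
  have hp : 0 < p := Nat.pos_of_mul_pos_right hpe
  have he : 0 < e := Nat.pos_of_mul_pos_left hpe
  -- In `∏_{0<m<pe} (1 - ζ^m) = pe`, the factors with `p ∣ m` form the same product for `ζ^p`,
  -- of order `e`.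
  have hall := hζ.prod_range_ite_one_sub_pow hpe
  have hcoprime : ∏ m ∈ range (p * e) with ¬p ∣ m, (if m = 0 then 1 else 1 - ζ ^ m) =
      ∏ m ∈ range (p * e) with ¬p ∣ m, (1 - ζ ^ m) :=
    prod_congr rfl fun m hm => if_neg (by rintro rfl; exact (mem_filter.1 hm).2 (dvd_zero p))
  rw [← prod_filter_mul_prod_filter_not (range (p * e)) (p ∣ ·),
    prod_range_mul_filter_dvd _ hp, hcoprime] at hall
  have hmult : ∏ j ∈ range e, (if p * j = 0 then 1 else 1 - ζ ^ (p * j)) = e := by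
    simp only [mul_eq_zero, hp.ne', false_or, pow_mul]
    exact (hζ.pow hpe rfl).prod_range_ite_one_sub_pow he
  rw [hmult, Nat.cast_mul, mul_comm (p : K)] at hall
  exact mul_left_cancel₀ (Nat.cast_ne_zero.2 he.ne') hall

theorem IsPrimitiveRoot.prod_filter_not_dvd_one_sub_pow_eq_ite {p t d : ℕ}
    (hζ : IsPrimitiveRoot ζ d) (hpt : 0 < p * t) (hd : d ∣ p * t) :
    ∏ m ∈ range (p * t) with ¬p ∣ m, (1 - ζ ^ m) =
      if p ∣ d then (p : K) ^ (p * t / d) else 0 := by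
  split_ifs with hpd
  · obtain ⟨e, rfl⟩ := hpd
    have hpe : 0 < p * e := Nat.pos_of_dvd_of_pos hd hpt
    have hper : Function.Periodic (fun m => if ¬p ∣ m then 1 - ζ ^ m else 1) (p * e) :=
      fun m => by simp only [Nat.dvd_add_left (dvd_mul_right p e), pow_add, hζ.pow_eq_one, mul_one]
    obtain ⟨q, hq⟩ := hd
    rw [prod_filter, hq, prod_range_mul_of_periodic hper, ← prod_filter,
      hζ.prod_filter_not_dvd_one_sub_pow hpe, Nat.mul_div_cancel_left q hpe]
  · refine prod_eq_zero (i := d) (mem_filter.2 ⟨mem_range.2 ?_, hpd⟩)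
      (by rw [hζ.pow_eq_one, sub_self])
    exact lt_of_le_of_ne (Nat.le_of_dvd hpt hd) (fun h => hpd (h ▸ dvd_mul_right p t))

theorem prod_filter_not_dvd_one_sub_pow_of_pow_eq_one {p t : ℕ} (hp : p.Prime) (ht : 0 < t)
    {z : K} (hz1 : z ≠ 1) (hzp : z ^ p = 1) :
    ∏ m ∈ range (p * t) with ¬p ∣ m, (1 - z ^ m) = p ^ t := by
  have := Fact.mk hp
  have hz : IsPrimitiveRoot z p := IsPrimitiveRoot.iff_orderOf.2 (orderOf_eq_prime hzp hz1)
  rw [hz.prod_filter_not_dvd_one_sub_pow_eq_ite (Nat.mul_pos hp.pos ht) (dvd_mul_right p t),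
    if_pos dvd_rfl, Nat.mul_div_cancel_left t hp.pos]

end RootsOfUnity

theorem norm_prod_filter_not_dvd_one_sub_pow_le {p t : ℕ} (hp : 0 < p) (ht : 0 < t) {z : ℂ}
    (hzN : z ^ (p * t) = 1) (hzp : z ^ p ≠ 1) :
    ‖∏ m ∈ range (p * t) with ¬p ∣ m, (1 - z ^ m)‖ ≤ (p : ℝ) ^ ((t : ℝ) / 2) := by
  have hd : orderOf z ∣ p * t := orderOf_dvd_of_pow_eq_one hzN
  rw [(IsPrimitiveRoot.orderOf z).prod_filter_not_dvd_one_sub_pow_eq_ite (by positivity) hd]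
  split_ifs with hpd
  · obtain ⟨e, he⟩ := hpd
    have he2 : 2 ≤ e := by
      rcases e with _ | _ | e
      · rw [he, mul_zero, zero_dvd_iff] at hd
        exact absurd hd (Nat.mul_pos hp ht).ne'
      · exact absurd (he ▸ pow_orderOf_eq_one z) (by simpa using hzp)
      · omega
    obtain ⟨q, rfl⟩ : e ∣ t := Nat.dvd_of_mul_dvd_mul_left hp (he ▸ hd)
    rw [he, Nat.mul_div_mul_left _ _ hp, Nat.mul_div_cancel_left _ (by omega), norm_pow,
      Complex.norm_natCast, ← Real.rpow_natCast]
    refine Real.rpow_le_rpow_of_exponent_le (by exact_mod_cast hp) ?_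
    rw [le_div_iff₀ (by norm_num)]
    have : q * 2 ≤ e * q := by nlinarith
    exact_mod_cast this
  · simp only [norm_zero]
    positivity

theorem borweinPoly_eq_pow (p s n : ℕ) :
    borweinPoly p s n = (∏ m ∈ range (p * (n + 1)) with ¬p ∣ m, (1 - X ^ m)) ^ s := by
  rw [borweinPoly, prod_range_mul_filter_not_dvd, ← prod_pow]
  exact prod_congr rfl fun j _ => prod_pow _ _ _

theorem eval_map_borweinPoly {K : Type*} [Field K] (p s n : ℕ) (z : K) :
    ((borweinPoly p s n).map (Int.castRingHom K)).eval z =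
      (∏ m ∈ range (p * (n + 1)) with ¬p ∣ m, (1 - z ^ m)) ^ s := by
  simp [borweinPoly_eq_pow, Polynomial.map_prod, eval_prod]

theorem natDegree_borweinPoly_lt {p : ℕ} (hp : 2 ≤ p) (s n : ℕ) :
    (borweinPoly p s n).natDegree < p * (n + 1) * (borweinDeg p s n + 1) := by
  have hfactor : ∀ j ∈ range (n + 1), ∀ k ∈ Icc 1 (p - 1),
      ((1 - X ^ (p * j + k) : ℤ[X]) ^ s).natDegree ≤ s * (p * (n + 1)) := fun j hj k hk => by
    refine natDegree_pow_le.trans (Nat.mul_le_mul_left s ?_)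
    refine (natDegree_sub_le _ _).trans ?_
    simp only [natDegree_one, natDegree_X_pow, zero_le, sup_of_le_right]
    simp only [mem_range, mem_Icc] at hj hk
    have := Nat.mul_le_mul_left p (Nat.lt_succ_iff.1 hj)
    have : p * (n + 1) = p * n + p := by ring
    omega
  have hdeg : (n + 1) * (p - 1) * s ≤ borweinDeg p s n := by
    rw [borweinDeg, Nat.le_div_iff_mul_le two_pos]
    calc (n + 1) * (p - 1) * s * 2 ≤ (n + 1) * (p - 1) * s * (p * (n + 1)) :=
          Nat.mul_le_mul_left _ (by nlinarith)
      _ = p * (p - 1) * s * (n + 1) ^ 2 := by ring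
  calc (borweinPoly p s n).natDegree
      ≤ ∑ j ∈ range (n + 1), ∑ k ∈ Icc 1 (p - 1), s * (p * (n + 1)) :=
        (natDegree_prod_le _ _).trans <| sum_le_sum fun j hj =>
          (natDegree_prod_le _ _).trans <| sum_le_sum (hfactor j hj)
    _ = p * (n + 1) * ((n + 1) * (p - 1) * s) := by
        simp only [sum_const, card_range, Nat.card_Icc, Nat.add_sub_cancel, smul_eq_mul]
        ring
    _ < p * (n + 1) * (borweinDeg p s n + 1) :=
        Nat.mul_lt_mul_of_pos_left (Nat.lt_succ_of_le hdeg) (by positivity)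

theorem mul_borweinM_eq_sum {K : Type*} [Field K] {p s n b : ℕ} (hp : 2 ≤ p)
    (hb : b < p * (n + 1)) {ζ : K} (hζ : IsPrimitiveRoot ζ (p * (n + 1))) :
    ((p * (n + 1) : ℕ) : K) * borweinM p s n b = ∑ a ∈ range (p * (n + 1)),
      ζ ^ ((p * (n + 1) - b) * a) *
        (∏ m ∈ range (p * (n + 1)) with ¬p ∣ m, (1 - (ζ ^ a) ^ m)) ^ s := by
  have hdeg :=
    (natDegree_map_le (f := Int.castRingHom K)).trans_lt (natDegree_borweinPoly_lt hp s n)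
  simp only [borweinM, borweinCoeff, Int.cast_sum, ← eval_map_borweinPoly,
    ← hζ.mul_sum_coeff_add_mul hb hdeg, coeff_map, eq_intCast]

theorem IsPrimitiveRoot.sum_range_ite_dvd_pow {K : Type*} [Field K] {p t : ℕ} (hpt : 0 < p * t)
    {ζ : K} (hζ : IsPrimitiveRoot ζ (p * t)) (c : ℕ) :
    ∑ a ∈ range (p * t), (if t ∣ a then ζ ^ (c * a) else 0) =
      if p ∣ c then (p : K) else 0 := by
  have ht : 0 < t := Nat.pos_of_mul_pos_left hpt
  rw [← sum_filter, mul_comm p, sum_range_mul_filter_dvd _ ht,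
    ← (hζ.pow hpt (mul_comm p t)).sum_pow_pow_eq_ite c]
  exact sum_congr rfl fun k _ => by ring

theorem norm_pow_prod_filter_not_dvd_sub_ite_le {p t : ℕ} (hp : p.Prime) (ht : 0 < t) (s : ℕ)
    {z : ℂ} (hzN : z ^ (p * t) = 1) (hz1 : z ≠ 1) :
    ‖(∏ m ∈ range (p * t) with ¬p ∣ m, (1 - z ^ m)) ^ s -
        (if z ^ p = 1 then (p : ℂ) ^ (s * t) else 0)‖ ≤ (p : ℝ) ^ ((s : ℝ) * t / 2) := by
  split_ifs with hzp
  · rw [prod_filter_not_dvd_one_sub_pow_of_pow_eq_one hp ht hz1 hzp, ← pow_mul, mul_comm,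
      sub_self, norm_zero]
    positivity
  · rw [sub_zero, norm_pow]
    calc ‖∏ m ∈ range (p * t) with ¬p ∣ m, (1 - z ^ m)‖ ^ s
        ≤ ((p : ℝ) ^ ((t : ℝ) / 2)) ^ s :=
          pow_le_pow_left₀ (norm_nonneg _)
            (norm_prod_filter_not_dvd_one_sub_pow_le hp.pos ht hzN hzp) s
      _ = (p : ℝ) ^ ((s : ℝ) * t / 2) := by
          rw [← Real.rpow_natCast, ← Real.rpow_mul (Nat.cast_nonneg p)]
          ring_nf

theorem mul_borweinM_sub_eq_sum {K : Type*} [Field K] {p s n b : ℕ} (hp : p.Prime) (hs : 1 ≤ s)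
    (hb : b < p * (n + 1)) {ζ : K} (hζ : IsPrimitiveRoot ζ (p * (n + 1))) :
    ((p * (n + 1) : ℕ) : K) * borweinM p s n b -
        ((if p ∣ b then (p : K) else 0) - 1) * (p : K) ^ (s * (n + 1)) =
      ∑ a ∈ (range (p * (n + 1))).erase 0, ζ ^ ((p * (n + 1) - b) * a) *
        ((∏ m ∈ range (p * (n + 1)) with ¬p ∣ m, (1 - (ζ ^ a) ^ m)) ^ s -
          if n + 1 ∣ a then (p : K) ^ (s * (n + 1)) else 0) := by
  set N := p * (n + 1)
  set P : K := (p : K) ^ (s * (n + 1))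
  have hN0 : 0 < N := Nat.mul_pos hp.pos n.succ_pos
  set F : ℕ → K := fun a =>
    ζ ^ ((N - b) * a) * (∏ m ∈ range N with ¬p ∣ m, (1 - (ζ ^ a) ^ m)) ^ s
  set G : ℕ → K := fun a => ζ ^ ((N - b) * a) * (if n + 1 ∣ a then P else 0)
  -- `F 0 = 0` but `G 0 = P`: this mismatch at `a = 0` produces the `- 1` in the main term.
  have hF0 : F 0 = 0 := by
    have h1 : 1 ∈ range N :=
      mem_range.2 (hp.one_lt.trans_le (Nat.le_mul_of_pos_right p n.succ_pos))
    have hS : ∏ m ∈ range N with ¬p ∣ m, (1 - (ζ ^ 0) ^ m) = 0 :=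
      prod_eq_zero (mem_filter.2 ⟨h1, hp.not_dvd_one⟩) (by simp)
    simp only [F, hS, zero_pow (by omega : s ≠ 0), mul_zero]
  have hG0 : G 0 = P := by simp [G]
  have hG : ∑ a ∈ range N, G a = (if p ∣ b then (p : K) else 0) * P := by
    have hG' (a : ℕ) : G a = (if n + 1 ∣ a then ζ ^ ((N - b) * a) else 0) * P := by
      simp only [G, mul_ite, ite_mul, mul_zero, zero_mul]
    simp only [hG', ← sum_mul]
    rw [hζ.sum_range_ite_dvd_pow hN0]
    simp only [Nat.dvd_sub_iff_right hb.le (dvd_mul_right p (n + 1))]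
  have hF : (N : K) * borweinM p s n b = ∑ a ∈ range N, F a :=
    mul_borweinM_eq_sum hp.two_le hb hζ
  have hGsplit := add_sum_erase (range N) G (mem_range.2 hN0)
  rw [hG0, hG] at hGsplit
  simp only [mul_sub]
  rw [hF, ← add_sum_erase _ _ (mem_range.2 hN0), hF0, sum_sub_distrib]
  linear_combination hGsplit

theorem abs_mul_borweinM_sub_le {p s n b : ℕ} (hp : p.Prime) (hs : 1 ≤ s)
    (hb : b < p * (n + 1)) :
    |(p * (n + 1) : ℝ) * borweinM p s n b -
        ((if p ∣ b then (p : ℝ) else 0) - 1) * p ^ (s * (n + 1))|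
      ≤ (p * (n + 1) : ℝ) * (p : ℝ) ^ ((s : ℝ) * ((n : ℝ) + 1) / 2) := by
  have hN0 : 0 < p * (n + 1) := Nat.mul_pos hp.pos n.succ_pos
  obtain ⟨ζ, hζ⟩ : ∃ ζ : ℂ, IsPrimitiveRoot ζ (p * (n + 1)) :=
    ⟨_, Complex.isPrimitiveRoot_exp _ hN0.ne'⟩
  have hcast : (((p * (n + 1) : ℝ) * borweinM p s n b -
      ((if p ∣ b then (p : ℝ) else 0) - 1) * p ^ (s * (n + 1)) : ℝ) : ℂ) =
      ((p * (n + 1) : ℕ) : ℂ) * borweinM p s n b -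
        ((if p ∣ b then (p : ℂ) else 0) - 1) * (p : ℂ) ^ (s * (n + 1)) := by
    push_cast
    split_ifs <;> simp
  rw [← Real.norm_eq_abs, ← Complex.norm_real, hcast, mul_borweinM_sub_eq_sum hp hs hb hζ]
  refine (norm_sum_le _ _).trans <| (sum_le_card_nsmul _ _
    ((p : ℝ) ^ ((s : ℝ) * ((n : ℝ) + 1) / 2)) fun a ha => ?_).trans ?_
  · rw [mem_erase, mem_range] at ha
    have hzN : (ζ ^ a) ^ (p * (n + 1)) = 1 := by
      rw [← pow_mul, mul_comm, pow_mul, hζ.pow_eq_one, one_pow]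
    have hpow_iff : (ζ ^ a) ^ p = 1 ↔ n + 1 ∣ a := by
      rw [← pow_mul, hζ.pow_eq_one_iff_dvd, mul_comm p, Nat.mul_dvd_mul_iff_right hp.pos]
    rw [norm_mul, norm_pow, hζ.norm'_eq_one hN0.ne', one_pow, one_mul]
    simpa [hpow_iff] using norm_pow_prod_filter_not_dvd_sub_ite_le hp n.succ_pos s hzN
      (hζ.pow_ne_one_of_pos_of_lt ha.1 ha.2)
  · rw [nsmul_eq_mul]
    gcongr
    exact_mod_cast (card_erase_le).trans (card_range _).le

theorem stmt_0_general (p s n b : ℕ) (hp : p.Prime) (hs : 1 ≤ s)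
    (hb : b < p * (n + 1)) :
    |(borweinM p s n b : ℝ) -
        (if p ∣ b then ((p : ℝ) - 1) * (p : ℝ) ^ (s * (n + 1) - 1)
          else -(p : ℝ) ^ (s * (n + 1) - 1)) / ((n : ℝ) + 1)|
      ≤ (p : ℝ) ^ (((s : ℝ) * ((n : ℝ) + 1)) / 2) := by
  have hp0 : (p : ℝ) ≠ 0 := by exact_mod_cast hp.ne_zero
  have hN : (0 : ℝ) < p * (n + 1) := by have := hp.pos; positivity
  obtain ⟨e, he⟩ : ∃ e, s * (n + 1) = e + 1 :=
    Nat.exists_eq_add_one_of_ne_zero (Nat.mul_pos hs n.succ_pos).ne'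
  have hdiv : (borweinM p s n b : ℝ) -
      (if p ∣ b then ((p : ℝ) - 1) * (p : ℝ) ^ (s * (n + 1) - 1)
        else -(p : ℝ) ^ (s * (n + 1) - 1)) / ((n : ℝ) + 1) =
      ((p * (n + 1)) * borweinM p s n b -
        ((if p ∣ b then (p : ℝ) else 0) - 1) * p ^ (s * (n + 1))) / (p * (n + 1)) := by
    rw [he, Nat.add_sub_cancel]
    field_simp
    split_ifs <;> ring
  rw [hdiv, abs_div, abs_of_pos hN, div_le_iff₀ hN, mul_comm _ (p * (n + 1) : ℝ)]
  exact abs_mul_borweinM_sub_le hp hs hb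

theorem stmt_0 (p s n b : ℕ) (hp : p.Prime) (hp3 : 3 ≤ p) (hs : 1 ≤ s)
    (hb : b < p * (n + 1)) :
    |(borweinM p s n b : ℝ) -
        (if p ∣ b then ((p : ℝ) - 1) * (p : ℝ) ^ (s * (n + 1) - 1)
          else -(p : ℝ) ^ (s * (n + 1) - 1)) / ((n : ℝ) + 1)|
      ≤ (p : ℝ) ^ (((s : ℝ) * ((n : ℝ) + 1)) / 2) :=
  stmt_0_general p s n b hp hs hb
end

section
/- Let p > 15 be a prime and s ≥ 1 an integer. Then there exists an integer N₀ such that for all n ≥ N₀, max_i |t_{i,p,s}| > p^{s(n+1)−2}/(s·n²), where the maximum is over 0 ≤ i ≤ d_{p,s,n}. -/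
open Polynomial Finset

/-- `max_i |t_{i,p,s}|`, the maximum over `0 ≤ i ≤ d_{p,s,n}` of the absolute values
of the coefficients of `T_{p,s,n}`. -/
noncomputable def borweinMaxAbs (p s n : ℕ) : ℕ :=
  (Finset.range (borweinDeg p s n + 1)).sup fun i => (borweinCoeff p s n i).natAbs


lemma range_eq_insert (p : ℕ) (hp : 0 < p) :
    Finset.range p = insert 0 (Finset.Icc 1 (p - 1)) := by
  ext x
  simp only [Finset.mem_range, Finset.mem_insert, Finset.mem_Icc]
  omega

lemma prod_one_sub_prim {p : ℕ} (hp : 0 < p) {ω : ℂ} (hω : IsPrimitiveRoot ω p) :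
    ∏ k ∈ Finset.Icc 1 (p - 1), (1 - ω ^ k) = p := by
  have h1 : (X : ℂ[X]) ^ p - 1 = ∏ i ∈ Finset.range p, (X - C (ω ^ i)) := by
    simpa using X_pow_sub_C_eq_prod hω hp (one_pow p)
  have h0 : (0 : ℕ) ∉ Finset.Icc 1 (p - 1) := by simp
  have h2 : (X : ℂ[X]) ^ p - 1
      = (X - 1) * ∏ i ∈ Finset.Icc 1 (p - 1), (X - C (ω ^ i)) := by
    rw [h1, range_eq_insert p hp, Finset.prod_insert h0]
    simp
  have h3 : ((∑ i ∈ Finset.range p, (X : ℂ[X]) ^ i)) * (X - 1) = X ^ p - 1 :=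
    geom_sum_mul _ _
  have hXne : (X : ℂ[X]) - 1 ≠ 0 := by
    have := Polynomial.X_sub_C_ne_zero (1 : ℂ)
    simpa using this
  have h4 : ∏ i ∈ Finset.Icc 1 (p - 1), ((X : ℂ[X]) - C (ω ^ i))
      = ∑ i ∈ Finset.range p, (X : ℂ[X]) ^ i := by
    apply mul_left_cancel₀ hXne
    rw [← h2, ← h3, mul_comm]
  have := congrArg (Polynomial.eval (1 : ℂ)) h4
  simpa [eval_prod, eval_finset_sum] using this

lemma aeval_borwein {p s n : ℕ} (hp : 0 < p) {ω : ℂ} (hω : IsPrimitiveRoot ω p) :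
    Polynomial.aeval ω (borweinPoly p s n) = (p : ℂ) ^ (s * (n + 1)) := by
  rw [borweinPoly]
  simp only [map_prod, map_pow, map_sub, map_one, aeval_X_pow, aeval_X]
  have hexp : ∀ j k : ℕ, ω ^ (p * j + k) = ω ^ k := by
    intro j k
    rw [pow_add, pow_mul, hω.pow_eq_one, one_pow, one_mul]
  calc ∏ j ∈ Finset.range (n + 1), ∏ k ∈ Finset.Icc 1 (p - 1), (1 - ω ^ (p * j + k)) ^ s
      = ∏ j ∈ Finset.range (n + 1), ∏ k ∈ Finset.Icc 1 (p - 1), (1 - ω ^ k) ^ s := by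
        simp only [hexp]
    _ = ∏ j ∈ Finset.range (n + 1), ((p : ℂ)) ^ s := by
        refine Finset.prod_congr rfl fun j _ => ?_
        rw [Finset.prod_pow, prod_one_sub_prim hp hω]
    _ = (p : ℂ) ^ (s * (n + 1)) := by
        rw [Finset.prod_const, Finset.card_range, ← pow_mul]

lemma borwein_natDegree_le (p s n : ℕ) (hp : 0 < p) :
    (borweinPoly p s n).natDegree ≤ borweinDeg p s n := by
  have h1 : (borweinPoly p s n).natDegree
      ≤ ∑ j ∈ Finset.range (n + 1), ∑ k ∈ Finset.Icc 1 (p - 1), s * (p * j + k) := by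
    refine (natDegree_prod_le _ _).trans (Finset.sum_le_sum fun j _ => ?_)
    refine (natDegree_prod_le _ _).trans (Finset.sum_le_sum fun k _ => ?_)
    refine (natDegree_pow_le).trans ?_
    refine Nat.mul_le_mul_left s ?_
    refine (natDegree_sub_le _ _).trans ?_
    simp
  refine h1.trans ?_
  rw [borweinDeg, Nat.le_div_iff_mul_le (by norm_num : 0 < 2)]
  have hB : (∑ k ∈ Finset.Icc 1 (p - 1), k) * 2 = p * (p - 1) := by
    have hset : Finset.range p = insert 0 (Finset.Icc 1 (p - 1)) := by
      ext x
      simp only [Finset.mem_range, Finset.mem_insert, Finset.mem_Icc]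
      omega
    have h0 : (0 : ℕ) ∉ Finset.Icc 1 (p - 1) := by simp
    have := Finset.sum_range_id_mul_two p
    rwa [hset, Finset.sum_insert h0, zero_add] at this
  have hA : (∑ j ∈ Finset.range (n + 1), j) * 2 = (n + 1) * n := by
    simpa using Finset.sum_range_id_mul_two (n + 1)
  have hinner : ∀ j : ℕ, ∑ k ∈ Finset.Icc 1 (p - 1), s * (p * j + k)
      = (p - 1) * (s * (p * j)) + s * ∑ k ∈ Finset.Icc 1 (p - 1), k := by
    intro j
    simp only [Nat.mul_add, Finset.sum_add_distrib, Finset.sum_const, Nat.card_Icc,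
      Nat.add_sub_cancel, smul_eq_mul, ← Finset.mul_sum]
    simp [Finset.mul_sum]
  have hD : (∑ j ∈ Finset.range (n + 1), ∑ k ∈ Finset.Icc 1 (p - 1), s * (p * j + k))
      = (p - 1) * (s * p) * (∑ j ∈ Finset.range (n + 1), j)
        + (n + 1) * (s * ∑ k ∈ Finset.Icc 1 (p - 1), k) := by
    simp only [hinner, Finset.sum_add_distrib, Finset.sum_const, Finset.card_range,
      smul_eq_mul, ← Finset.mul_sum]
    rw [← Finset.mul_sum]
    ring
  refine le_of_eq ?_
  calc (∑ j ∈ Finset.range (n + 1), ∑ k ∈ Finset.Icc 1 (p - 1), s * (p * j + k)) * 2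
      = (p - 1) * (s * p) * ((∑ j ∈ Finset.range (n + 1), j) * 2)
        + (n + 1) * (s * ((∑ k ∈ Finset.Icc 1 (p - 1), k) * 2)) := by rw [hD]; ring
    _ = (p - 1) * (s * p) * ((n + 1) * n) + (n + 1) * (s * (p * (p - 1))) := by rw [hA, hB]
    _ = p * (p - 1) * s * (n + 1) ^ 2 := by ring

theorem stmt_9 (p s : ℕ) (hp : p.Prime) (hp15 : 15 < p) (hs : 1 ≤ s) :
    ∃ N₀ : ℕ, ∀ n : ℕ, N₀ ≤ n →
      (borweinMaxAbs p s n : ℝ) > (p : ℝ) ^ ((s : ℤ) * ((n : ℤ) + 1) - 2) / ((s : ℝ) * (n : ℝ) ^ 2) := by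
  refine ⟨3, fun n hn => ?_⟩
  have hp0 : 0 < p := hp.pos
  set d := borweinDeg p s n with hd
  set M := borweinMaxAbs p s n with hM
  set a := s * (n + 1) with ha
  obtain ⟨ω, hω⟩ : ∃ ω : ℂ, IsPrimitiveRoot ω p :=
    ⟨_, Complex.isPrimitiveRoot_exp p hp0.ne'⟩
  -- key inequality: p^a ≤ (d+1) * M  over ℝ
  have hkey : (p : ℝ) ^ a ≤ ((d : ℝ) + 1) * M := by
    have heval : Polynomial.eval ω ((borweinPoly p s n).map (Int.castRingHom ℂ))
        = (p : ℂ) ^ a := by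
      have h := aeval_borwein (p := p) (s := s) (n := n) hp0 hω
      rwa [aeval_def, eval₂_eq_eval_map, algebraMap_int_eq] at h
    have hdeg : ((borweinPoly p s n).map (Int.castRingHom ℂ)).natDegree < d + 1 :=
      Nat.lt_succ_of_le (natDegree_map_le.trans (borwein_natDegree_le p s n hp0))
    have hsum : Polynomial.eval ω ((borweinPoly p s n).map (Int.castRingHom ℂ))
        = ∑ i ∈ Finset.range (d + 1),
            ((borweinPoly p s n).map (Int.castRingHom ℂ)).coeff i * ω ^ i :=
      Polynomial.eval_eq_sum_range' hdeg ω
    have hnorm : ‖Polynomial.eval ω ((borweinPoly p s n).map (Int.castRingHom ℂ))‖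
        ≤ ((d : ℝ) + 1) * M := by
      rw [hsum]
      refine (norm_sum_le _ _).trans ?_
      have hterm : ∀ i ∈ Finset.range (d + 1),
          ‖((borweinPoly p s n).map (Int.castRingHom ℂ)).coeff i * ω ^ i‖ ≤ (M : ℝ) := by
        intro i hi
        rw [norm_mul, norm_pow, hω.norm'_eq_one hp0.ne', one_pow, mul_one, coeff_map]
        have : ‖((Int.castRingHom ℂ) ((borweinPoly p s n).coeff i))‖
            = (((borweinPoly p s n).coeff i).natAbs : ℝ) := by
          simp [Nat.cast_natAbs]
        rw [this]
        have hle : ((borweinPoly p s n).coeff i).natAbs ≤ M :=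
          Finset.le_sup (f := fun i => (borweinCoeff p s n i).natAbs) hi
        exact_mod_cast hle
      refine (Finset.sum_le_sum hterm).trans ?_
      rw [Finset.sum_const, Finset.card_range, nsmul_eq_mul]
      push_cast
      ring_nf
      exact le_refl _
    rw [heval] at hnorm
    calc (p : ℝ) ^ a = ‖(p : ℂ) ^ a‖ := by
          rw [norm_pow]
          norm_num
      _ ≤ ((d : ℝ) + 1) * M := hnorm
  -- arithmetic: d + 1 < p^2 * s * n^2
  have hdlt : d + 1 < p ^ 2 * s * n ^ 2 := by
    have h2 : d * 2 ≤ p * (p - 1) * s * (n + 1) ^ 2 := Nat.div_mul_le_self _ 2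
    have hpp : p * (p - 1) ≤ p ^ 2 := by
      have : p - 1 ≤ p := Nat.sub_le _ _
      calc p * (p - 1) ≤ p * p := Nat.mul_le_mul_left p this
        _ = p ^ 2 := (sq p).symm
    have h3 : d * 2 ≤ p ^ 2 * s * (n + 1) ^ 2 := by
      calc d * 2 ≤ p * (p - 1) * s * (n + 1) ^ 2 := h2
        _ ≤ p ^ 2 * s * (n + 1) ^ 2 := by
            exact Nat.mul_le_mul_right _ (Nat.mul_le_mul_right s hpp)
    have hp16 : 16 ≤ p := hp15
    nlinarith [sq_nonneg (n - 3), Nat.one_le_iff_ne_zero.mpr (by positivity : p ^ 2 * s ≠ 0)]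
  -- now conclude over ℝ
  have ha2 : 2 ≤ a := by
    have : 4 ≤ n + 1 := by omega
    calc 2 ≤ 1 * 4 := by norm_num
      _ ≤ s * (n + 1) := Nat.mul_le_mul hs this
  have hcast : (p : ℝ) ^ ((s : ℤ) * ((n : ℤ) + 1) - 2) = (p : ℝ) ^ (a - 2) := by
    have h1 : ((a - 2 : ℕ) : ℤ) = (a : ℤ) - 2 := by omega
    have h2 : (s : ℤ) * ((n : ℤ) + 1) - 2 = ((a - 2 : ℕ) : ℤ) := by
      rw [h1, ha]
      push_cast
      ring
    rw [h2, zpow_natCast]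
  rw [hcast]
  have hn3 : 3 ≤ n := hn
  have hsn : (0 : ℝ) < (s : ℝ) * (n : ℝ) ^ 2 := by positivity
  rw [gt_iff_lt, div_lt_iff₀ hsn]
  -- show p^(a-2) < M * (s * n^2)
  have hd1 : (0 : ℝ) < (d : ℝ) + 1 := by positivity
  rw [← mul_lt_mul_iff_right₀ hd1]
  have hppos : (0 : ℝ) < (p : ℝ) ^ (a - 2) := by positivity
  calc ((d : ℝ) + 1) * (p : ℝ) ^ (a - 2)
      < ((p : ℝ) ^ 2 * s * n ^ 2) * (p : ℝ) ^ (a - 2) := by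
        refine mul_lt_mul_of_pos_right ?_ hppos
        exact_mod_cast hdlt
    _ = ((s : ℝ) * (n : ℝ) ^ 2) * ((p : ℝ) ^ 2 * (p : ℝ) ^ (a - 2)) := by ring
    _ = ((s : ℝ) * (n : ℝ) ^ 2) * (p : ℝ) ^ a := by
        rw [← pow_add]
        rw [Nat.add_sub_cancel' ha2]
    _ ≤ ((s : ℝ) * (n : ℝ) ^ 2) * (((d : ℝ) + 1) * M) := by
        exact mul_le_mul_of_nonneg_left hkey (le_of_lt hsn)
    _ = ((d : ℝ) + 1) * ((M : ℝ) * ((s : ℝ) * (n : ℝ) ^ 2)) := by ring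
end

section
/- Let k ≥ 0, d ≥ 1 and m ≥ 0 be integers, and define t_i = −d·m if d | i and t_i = 0 if d ∤ i, for 1 ≤ i ≤ k. Then Z_k(t_1,…,t_k) = k! · [u^k](1 − u^d)^m, where [u^k] denotes the coefficient of u^k. -/
open Finset

/-- `Z_k(t_1,…,t_k) = Σ N(c_1,…,c_k) ∏_{i=1}^k t_i^{c_i}`, the sum being over all tuples
`(c_1,…,c_k)` of nonnegative integers with `Σ i·c_i = k`, where
`N(c_1,…,c_k) = k! / ∏ (i^{c_i}·c_i!)`.  The tuple is encoded as `c : Fin k → ℕ`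
with `c_{i+1} = c i`; note each `c_i ≤ k` automatically, so ranging over
`Finset.range (k+1)` loses nothing.  For `k = 0` this gives `Z_0 = 1`. -/
def Zk {R : Type*} [CommRing R] (k : ℕ) (t : ℕ → R) : R :=
  ∑ c ∈ (Fintype.piFinset fun _ : Fin k => Finset.range (k + 1)).filter
      (fun c => ∑ i : Fin k, (i.val + 1) * c i = k),
    ((Nat.factorial k / ∏ i : Fin k, (i.val + 1) ^ (c i) * Nat.factorial (c i) : ℕ) : R) *
      ∏ i : Fin k, (t (i.val + 1)) ^ (c i)

/-!
`Z_k(t) / k!` is the coefficient of `u^k` in `exp (∑ t_i u^i / i)`, and for the given `t` the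
exponent is `m · log (1 - u^d)`, so the series is `(1 - u^d)^m`.  To avoid power series, truncate
each factor `exp (t_i u^i / i)` at order `k`, which does not change the coefficient of `u^k`.  The
truncated product is a polynomial `P` in `v = u^d`, and modulo `v^(k/d)` it satisfies the
differential equation `(1 - v) P' = -m P` of `(1 - v)^m`, because
`(1 - v) · ∑_{l < L} v^l = 1 - v^L`.  Both have constant term `1`, and the equation determines
the remaining coefficients one at a time.
-/

open Polynomial Nat

theorem Nat.pow_mul_factorial_dvd_factorial_mul {l : ℕ} (hl : l ≠ 0) (c : ℕ) :
    l ^ c * c ! ∣ (c * l)! := by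
  rw [← uniformBell_mul_eq c hl, mul_assoc]
  have hl_dvd : l ∣ l ! := dvd_factorial (pos_of_ne_zero hl) le_rfl
  exact (mul_dvd_mul_right (pow_dvd_pow_of_dvd hl_dvd c) _).trans (dvd_mul_left _ _)

theorem Nat.prod_pow_mul_factorial_dvd_factorial_sum {n : ℕ} (c : Fin n → ℕ) :
    ∏ i : Fin n, (i.val + 1) ^ c i * (c i)! ∣ (∑ i : Fin n, (i.val + 1) * c i)! := by
  refine (prod_dvd_prod_of_dvd _ _ fun i _ => ?_).trans (prod_factorial_dvd_factorial_sum _ _)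
  rw [mul_comm (i.val + 1)]
  exact pow_mul_factorial_dvd_factorial_mul i.val.succ_ne_zero _

theorem prod_fin_eq_prod_range_div {M : Type*} [CommMonoid M] (g : ℕ → M) {d : ℕ}
    (hg : ∀ n, ¬d ∣ n → g n = 1) (k : ℕ) :
    ∏ i : Fin k, g (i + 1) = ∏ l ∈ range (k / d), g (d * (l + 1)) := by
  rw [Fin.prod_univ_eq_prod_range (fun i => g (i + 1))]
  induction k with
  | zero => simp
  | succ k ih =>
    rw [prod_range_succ, ih, Nat.succ_div]
    split_ifs with h
    · rw [prod_range_succ, ← Nat.succ_div_of_dvd h, Nat.mul_div_cancel' h]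
    · rw [hg _ h, add_zero, mul_one]

theorem map_Zk {R S : Type*} [CommRing R] [CommRing S] (f : R →+* S) (k : ℕ) (t : ℕ → R) :
    f (Zk k t) = Zk k (f ∘ t) := by
  simp [Zk]

section CommRing

variable {R : Type*} [CommRing R]

theorem coeff_one_sub_X_mul_derivative (H : R[X]) (n : ℕ) :
    ((1 - X) * derivative H).coeff n = H.coeff (n + 1) * (n + 1) - H.coeff n * n := by
  rw [sub_mul, one_mul, coeff_sub, coeff_derivative]
  cases n with
  | zero => simp
  | succ n => rw [coeff_X_mul, coeff_derivative]; push_cast; ring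

theorem one_sub_X_mul_derivative_one_sub_X_pow (m : ℕ) :
    (1 - X) * derivative ((1 - X : R[X]) ^ m) = C (-m : R) * (1 - X) ^ m := by
  cases m with
  | zero => simp
  | succ m =>
    rw [derivative_pow_succ, derivative_sub, derivative_one, derivative_X, pow_succ]
    simp only [Nat.cast_add_one, map_neg, map_add, map_one, map_natCast]
    ring

variable [IsDomain R] [CharZero R]

theorem X_pow_succ_dvd_of_X_pow_dvd_one_sub_X_mul_derivative_sub {L : ℕ} {a : R} {H : R[X]}
    (h0 : H.coeff 0 = 0) (hH : X ^ L ∣ (1 - X) * derivative H - C a * H) :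
    X ^ (L + 1) ∣ H := by
  rw [X_pow_dvd_iff] at hH ⊢
  intro n hn
  induction n with
  | zero => exact h0
  | succ n ih =>
    have hcoeff := hH n (by omega)
    rw [coeff_sub, coeff_one_sub_X_mul_derivative, coeff_C_mul, ih (by omega)] at hcoeff
    simpa [Nat.cast_add_one_ne_zero n] using hcoeff

end CommRing

section Field

variable {R : Type*} [Field R]

noncomputable def truncExp (K : ℕ) (a : R) (n : ℕ) : R[X] :=
  ∑ j ∈ range (K + 1), C (a ^ j / j !) * X ^ (n * j)

theorem truncExp_zero_left (K n : ℕ) : truncExp K (0 : R) n = 1 := by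
  rw [truncExp, sum_range_succ']
  simp

theorem expand_truncExp (K : ℕ) (a : R) (d n : ℕ) :
    expand R d (truncExp K a n) = truncExp K a (d * n) := by
  simp [truncExp, map_sum, ← pow_mul, mul_assoc]

variable [CharZero R]

theorem coeff_truncExp_zero {n : ℕ} (hn : 0 < n) (K : ℕ) (a : R) :
    (truncExp K a n).coeff 0 = 1 := by
  rw [truncExp, sum_range_succ', coeff_add, finsetSum_coeff]
  simp [hn.ne']

theorem Zk_eq_factorial_mul_coeff_prod_truncExp (k : ℕ) (t : ℕ → R) :
    Zk k t = k ! * (∏ i : Fin k, truncExp k (t (i + 1) / (i + 1 : ℕ)) (i + 1)).coeff k := by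
  simp only [truncExp, prod_univ_sum, finsetSum_coeff, mul_sum, Zk, sum_filter]
  refine sum_congr rfl fun c _ => ?_
  simp only [prod_mul_distrib, ← map_prod, prod_pow_eq_pow_sum, coeff_C_mul_X_pow]
  by_cases hc : ∑ i : Fin k, (i.val + 1) * c i = k
  · have hdvd := prod_pow_mul_factorial_dvd_factorial_sum c
    rw [hc, prod_mul_distrib] at hdvd
    rw [if_pos hc, if_pos hc.symm, Nat.cast_div hdvd (Nat.cast_ne_zero.mpr (by positivity))]
    push_cast
    simp only [div_pow, prod_div_distrib]
    ring
  · rw [if_neg hc, if_neg (Ne.symm hc), mul_zero]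

theorem derivative_truncExp {n : ℕ} (hn : 0 < n) (K : ℕ) (a : R) :
    derivative (truncExp K a n) = C (n * a) * X ^ (n - 1) * truncExp K a n
      - C (n * a ^ (K + 1) / K !) * X ^ (n * (K + 1) - 1) := by
  have hterm (j : ℕ) : derivative (C (a ^ (j + 1) / (j + 1)!) * X ^ (n * (j + 1))) =
      C (n * a) * X ^ (n - 1) * (C (a ^ j / j !) * X ^ (n * j)) := by
    have hcoeff : a ^ (j + 1) / (j + 1)! * ↑(n * (j + 1)) = n * a * (a ^ j / j !) := by
      push_cast [factorial_succ]
      field_simp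
      ring
    rw [derivative_C_mul_X_pow, hcoeff,
      show n * (j + 1) - 1 = n - 1 + n * j by rw [mul_add_one]; omega, pow_add, C_mul, C_mul]
    ring
  rw [truncExp, derivative_sum, sum_range_succ', mul_sum, sum_range_succ _ K]
  simp only [hterm, mul_zero, pow_zero, mul_one, derivative_C, add_zero]
  have htop : C (n * a ^ (K + 1) / K !) * X ^ (n * (K + 1) - 1) =
      C (n * a) * X ^ (n - 1) * (C (a ^ K / K !) * X ^ (n * K)) := by
    rw [show n * a ^ (K + 1) / K ! = n * a * (a ^ K / K !) by ring, C_mul,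
      show n * (K + 1) - 1 = n - 1 + n * K by rw [mul_add_one]; omega, pow_add]
    ring
  rw [htop, add_sub_cancel_right]

theorem X_pow_dvd_derivative_prod_truncExp_sub (K L : ℕ) (a : R) :
    X ^ K ∣ derivative (∏ l ∈ range L, truncExp K (a / (l + 1)) (l + 1))
      - C a * (∑ l ∈ range L, X ^ l) * ∏ l ∈ range L, truncExp K (a / (l + 1)) (l + 1) := by
  induction L with
  | zero => simp
  | succ L ih =>
    set P := ∏ l ∈ range L, truncExp K (a / (l + 1)) (l + 1)
    set e := truncExp K (a / (L + 1)) (L + 1)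
    have he : X ^ K ∣ derivative e - C a * X ^ L * e := by
      have hcoeff : ((L + 1 : ℕ) : R) * (a / (L + 1)) = a := by push_cast; field_simp
      rw [derivative_truncExp (by omega : 0 < L + 1), hcoeff, Nat.add_sub_cancel,
        sub_sub_cancel_left, dvd_neg]
      exact dvd_mul_of_dvd_right (pow_dvd_pow X (by rw [add_one_mul]; omega)) _
    rw [prod_range_succ, sum_range_succ, derivative_mul]
    have hsplit : derivative P * e + P * derivative e
          - C a * (∑ l ∈ range L, X ^ l + X ^ L) * (P * e) =
        (derivative P - C a * (∑ l ∈ range L, X ^ l) * P) * e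
          + P * (derivative e - C a * X ^ L * e) := by ring
    rw [hsplit]
    exact dvd_add (dvd_mul_of_dvd_left ih _) (dvd_mul_of_dvd_right he _)

theorem X_pow_succ_dvd_prod_truncExp_sub_one_sub_X_pow {K L : ℕ} (hLK : L ≤ K) (m : ℕ) :
    X ^ (L + 1) ∣ ∏ l ∈ range L, truncExp K (-m / (l + 1) : R) (l + 1) - (1 - X) ^ m := by
  set P := ∏ l ∈ range L, truncExp K (-m / (l + 1) : R) (l + 1)
  refine X_pow_succ_dvd_of_X_pow_dvd_one_sub_X_mul_derivative_sub (a := -(m : R)) ?_ ?_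
  · rw [coeff_sub, coeff_zero_prod, prod_congr rfl fun l _ => coeff_truncExp_zero l.succ_pos _ _,
      prod_const_one, coeff_zero_eq_eval_zero]
    simp
  · have hP := X_pow_dvd_derivative_prod_truncExp_sub K L (-m : R)
    have hsplit : (1 - X) * derivative (P - (1 - X) ^ m) - C (-m : R) * (P - (1 - X) ^ m)
        = (1 - X) * (derivative P - C (-m : R) * (∑ l ∈ range L, X ^ l) * P)
          - C (-m : R) * X ^ L * P := by
      rw [derivative_sub, mul_sub, one_sub_X_mul_derivative_one_sub_X_pow]
      linear_combination (C (-m : R) * P) * mul_neg_geom_sum (X : R[X]) L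
    rw [hsplit]
    exact dvd_sub (dvd_mul_of_dvd_right ((pow_dvd_pow X hLK).trans hP) _)
      (dvd_mul_of_dvd_left (dvd_mul_left _ _) _)

theorem Zk_eq_factorial_mul_coeff_one_sub_X_pow_pow {d : ℕ} (hd : 0 < d) (k m : ℕ) :
    Zk k (fun i => if d ∣ i then -((d : R) * m) else 0) =
      k ! * ((1 - X ^ d) ^ m : R[X]).coeff k := by
  set t : ℕ → R := fun i => if d ∣ i then -((d : R) * m) else 0
  have hfactor (l : ℕ) : truncExp k (t (d * (l + 1)) / (d * (l + 1) : ℕ)) (d * (l + 1)) =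
      expand R d (truncExp k (-m / (l + 1) : R) (l + 1)) := by
    rw [expand_truncExp]
    congr 1
    have hd' : (d : R) ≠ 0 := Nat.cast_ne_zero.mpr hd.ne'
    simp only [t, dvd_mul_right, if_true]
    push_cast
    field_simp
  have hprod : ∏ i : Fin k, truncExp k (t (i + 1) / (i + 1 : ℕ)) (i + 1) =
      expand R d (∏ l ∈ range (k / d), truncExp k (-m / (l + 1) : R) (l + 1)) := by
    rw [prod_fin_eq_prod_range_div (fun n => truncExp k (t n / n) n) (fun n hn => ?_) k, map_prod]
    · exact prod_congr rfl fun l _ => hfactor l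
    · simp only [t, if_neg hn, zero_div, truncExp_zero_left]
  have hdvd := map_dvd (expand R d)
    (X_pow_succ_dvd_prod_truncExp_sub_one_sub_X_pow (Nat.div_le_self k d) m)
  rw [map_sub, ← hprod, map_pow, map_pow, map_sub, map_one, expand_X, ← pow_mul,
    X_pow_dvd_iff] at hdvd
  rw [Zk_eq_factorial_mul_coeff_prod_truncExp, ← sub_eq_zero, ← mul_sub, ← coeff_sub,
    hdvd k (Nat.lt_mul_div_succ k hd), mul_zero]

end Field

theorem stmt_17 (k d m : ℕ) (hd : 1 ≤ d) :
    Zk k (fun i => if d ∣ i then -((d : ℤ) * (m : ℤ)) else 0) =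
      (Nat.factorial k : ℤ) * ((1 - Polynomial.X ^ d) ^ m : Polynomial ℤ).coeff k := by
  apply Int.cast_injective (α := ℚ)
  have hZ := map_Zk (Int.castRingHom ℚ) k fun i => if d ∣ i then -((d : ℤ) * (m : ℤ)) else 0
  have hcoeff := coeff_map (Int.castRingHom ℚ) (p := ((1 - X ^ d) ^ m : ℤ[X])) k
  simp only [eq_intCast, Function.comp_def, apply_ite, Int.cast_neg, Int.cast_mul,
    Int.cast_natCast, Int.cast_zero] at hZ
  simp only [eq_intCast, Polynomial.map_pow, Polynomial.map_sub, Polynomial.map_one,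
    Polynomial.map_X] at hcoeff
  rw [Int.cast_mul, hZ, ← hcoeff, Zk_eq_factorial_mul_coeff_one_sub_X_pow_pow hd,
    Int.cast_natCast]
end

section
/- Let ψ be a complex-valued additive character of G = ℤ/Nℤ whose order o(ψ) is not divisible by p (so that o(ψ) divides n+1 and (p−1)N/(p·o(ψ)) is a positive integer), and let k ≥ 1. Then F_ψ(X̄_k) = (−1)^k · k! · [u^k](1 − u^{o(ψ)})^{(p−1)N/(p·o(ψ))}, where [u^k] denotes the coefficient of u^k in the polynomial. -/
open Finset

/-- `D`: the residues in `ℤ/Nℤ` not divisible by `p` (complement of the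
index-`p` subgroup `pG`). -/
def resD (p N : ℕ) [NeZero N] : Finset (ZMod N) :=
  Finset.univ.filter fun a => ¬ p ∣ a.val

/-- `s_D(ψ) = Σ_{a ∈ D} ψ(a)`. -/
noncomputable def sD (p N : ℕ) [NeZero N] (ψ : AddChar (ZMod N) ℂ) : ℂ :=
  ∑ a ∈ resD p N, ψ a

/-!
Counting ordered tuples of distinct elements, `F_ψ(X̄_k) = k! · e_k(ψ(a) : a ∈ D)`, the `k`-th
coefficient of `∏_{a ∈ D} (1 + ψ(a) u)`. Translation by `p` preserves `D` and multiplies `ψ` by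
`ψ(p)`, which is a primitive `o(ψ)`-th root of unity because `p ∤ o(ψ)`. Hence `ψ` takes every
`o(ψ)`-th root of unity equally often on `D`, namely `|D| / o(ψ) = (p - 1)N / (p o(ψ))` times, and
`∏_{ζ^d = 1} (1 + ζ u) = 1 - (-u)^d`. The substitution `u ↦ -u` accounts for the sign `(-1)^k`.
-/

open Polynomial
open scoped Nat

section InjectiveTuples

variable {α : Type*} [DecidableEq α] [Fintype α]

theorem card_injective_with_image_eq_factorial (k : ℕ) {S : Finset α} (hS : #S = k) :
    #{x : Fin k → α | Function.Injective x ∧ univ.image x = S} = k ! := by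
  have hcard : Fintype.card (Fin k) = Fintype.card S := by simp [hS]
  have e : {x : Fin k → α // Function.Injective x ∧ univ.image x = S} ≃ (Fin k ≃ S) :=
    { toFun := fun x => Equiv.ofBijective
        (fun i => ⟨x.1 i, x.2.2.subset (mem_image_of_mem x.1 (mem_univ i))⟩)
        ((Fintype.bijective_iff_injective_and_card _).2
          ⟨fun i j h => x.2.1 (congrArg Subtype.val h), hcard⟩)
      invFun := fun e => ⟨fun i => e i, Subtype.coe_injective.comp e.injective, by
        ext a
        simp only [mem_image, mem_univ, true_and]
        exact ⟨fun ⟨i, hi⟩ => hi ▸ (e i).2, fun ha => ⟨e.symm ⟨a, ha⟩, by simp⟩⟩⟩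
      left_inv := fun x => rfl
      right_inv := fun e => by ext; rfl }
  rw [← Fintype.card_subtype, Fintype.card_congr e,
    Fintype.card_equiv (Fintype.equivOfCardEq hcard), Fintype.card_fin]

theorem sum_prod_injective_eq_factorial_mul {R : Type*} [CommSemiring R] (k : ℕ) (D : Finset α)
    (f : α → R) :
    ∑ x ∈ univ.filter (fun x : Fin k → α => (∀ i, x i ∈ D) ∧ Function.Injective x),
        ∏ i, f (x i) = k ! * ∑ S ∈ D.powersetCard k, ∏ a ∈ S, f a := by
  set T := univ.filter (fun x : Fin k → α => (∀ i, x i ∈ D) ∧ Function.Injective x)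
  have maps_to : ∀ x ∈ T, univ.image x ∈ D.powersetCard k := by
    intro x hx
    simp only [T, mem_filter, mem_univ, true_and] at hx
    rw [mem_powersetCard, card_image_of_injective _ hx.2, card_univ, Fintype.card_fin]
    exact ⟨fun a ha => by obtain ⟨i, -, rfl⟩ := mem_image.1 ha; exact hx.1 i, rfl⟩
  rw [← sum_fiberwise_of_maps_to maps_to, mul_sum]
  refine sum_congr rfl fun S hS => ?_
  rw [mem_powersetCard] at hS
  have fiber_eq : {x ∈ T | univ.image x = S} =
      ({x | Function.Injective x ∧ univ.image x = S} : Finset (Fin k → α)) := by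
    ext x
    simp only [T, mem_filter, mem_univ, true_and]
    refine ⟨fun h => ⟨h.1.2, h.2⟩, fun h => ⟨⟨fun i => hS.1 ?_, h.1⟩, h.2⟩⟩
    exact h.2 ▸ mem_image_of_mem x (mem_univ i)
  rw [fiber_eq, sum_congr rfl fun x hx => ?_, sum_const,
    card_injective_with_image_eq_factorial k hS.2, nsmul_eq_mul]
  simp only [mem_filter, mem_univ, true_and] at hx
  rw [← hx.2, prod_image fun i _ j _ h => hx.1 h]

end InjectiveTuples

theorem Polynomial.coeff_comp_neg_X {R : Type*} [CommRing R] (f : R[X]) (k : ℕ) :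
    (f.comp (-X)).coeff k = (-1) ^ k * f.coeff k := by
  rw [← neg_one_mul (X : R[X]), ← C_1, ← C_neg, comp_C_mul_X_coeff, mul_comm]

theorem Polynomial.coeff_prod_one_add_C_mul_X {ι R : Type*} [CommSemiring R] (s : Finset ι)
    (f : ι → R) (k : ℕ) :
    (∏ i ∈ s, (1 + C (f i) * X)).coeff k = ∑ t ∈ s.powersetCard k, ∏ i ∈ t, f i := by
  classical
  simp_rw [prod_one_add, prod_mul_distrib, prod_const, ← map_prod, finsetSum_coeff,
    coeff_C_mul_X_pow, powersetCard_eq_filter, sum_filter, eq_comm (a := k)]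

theorem prod_nthRootsFinset_one_add_C_mul_X {K : Type*} [Field K] [Infinite K] {ζ : K} {d : ℕ}
    (hζ : IsPrimitiveRoot ζ d) (hd : 0 < d) :
    ∏ η ∈ nthRootsFinset d (1 : K), (1 + C η * X) = 1 - (-X) ^ d := by
  refine Polynomial.funext fun x => ?_
  simpa [eval_prod] using (hζ.pow_sub_pow_eq_prod_sub_mul 1 (-x) hd).symm

section TranslationInvariant

variable {G M : Type*} [AddGroup G] [CommMonoid M] [DecidableEq M] (ψ : AddChar G M)
  {S : Finset G} {t : G}

theorem AddChar.card_filter_apply_eq_mul_pow (hS : ∀ a, a + t ∈ S ↔ a ∈ S) (ζ : M) (j : ℕ) :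
    #{a ∈ S | ψ a = ζ * ψ t ^ j} = #{a ∈ S | ψ a = ζ} := by
  induction j with
  | zero => simp
  | succ j ih =>
    rw [← ih]
    refine card_nbij' (· - t) (· + t) (fun a ha => ?_) (fun a ha => ?_)
      (fun a _ => sub_add_cancel a t) (fun a _ => add_sub_cancel_right a t)
    · simp only [mem_coe, mem_filter] at ha ⊢
      rw [← sub_add_cancel a t, hS, AddChar.map_add_eq_mul, pow_succ, ← mul_assoc] at ha
      exact ⟨ha.1, (ψ.val_isUnit t).mul_left_inj.1 ha.2⟩
    · simp only [mem_coe, mem_filter] at ha ⊢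
      rw [hS, AddChar.map_add_eq_mul, ha.2, pow_succ, ← mul_assoc]
      exact ⟨ha.1, rfl⟩

end TranslationInvariant

section RootsOfUnity

variable {G R : Type*} [AddGroup G] [CommRing R] [IsDomain R] [DecidableEq R]
  (ψ : AddChar G R) {S : Finset G} {t : G} {d : ℕ}

theorem AddChar.card_filter_apply_eq_card_div (hS : ∀ a, a + t ∈ S ↔ a ∈ S) (hd : 0 < d)
    (ht : IsPrimitiveRoot (ψ t) d) (hψ : ∀ a, ψ a ^ d = 1) {ζ : R}
    (hζ : ζ ∈ nthRootsFinset d (1 : R)) : #{a ∈ S | ψ a = ζ} = #S / d := by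
  have : NeZero d := ⟨hd.ne'⟩
  have fiber_eq : ∀ ζ ∈ nthRootsFinset d (1 : R), #{a ∈ S | ψ a = ζ} = #{a ∈ S | ψ a = 1} := by
    intro ζ hζ
    obtain ⟨j, -, rfl⟩ := ht.eq_pow_of_pow_eq_one ((mem_nthRootsFinset hd 1).1 hζ)
    simpa using ψ.card_filter_apply_eq_mul_pow hS 1 j
  have card_eq : #S = d * #{a ∈ S | ψ a = 1} := by
    rw [card_eq_sum_card_fiberwise (t := nthRootsFinset d (1 : R))
      (fun a _ => (mem_nthRootsFinset hd 1).2 (hψ a)), sum_congr rfl fiber_eq, sum_const,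
      ht.card_nthRootsFinset, smul_eq_mul]
  rw [fiber_eq ζ hζ, card_eq, Nat.mul_div_cancel_left _ hd]

theorem AddChar.prod_comp_eq_prod_nthRootsFinset_pow {M : Type*} [CommMonoid M] (g : R → M)
    (hS : ∀ a, a + t ∈ S ↔ a ∈ S) (hd : 0 < d) (ht : IsPrimitiveRoot (ψ t) d)
    (hψ : ∀ a, ψ a ^ d = 1) :
    ∏ a ∈ S, g (ψ a) = (∏ ζ ∈ nthRootsFinset d (1 : R), g ζ) ^ (#S / d) := by
  rw [← prod_fiberwise_of_maps_to' (t := nthRootsFinset d (1 : R))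
    (fun a _ => (mem_nthRootsFinset hd 1).2 (hψ a)), ← prod_pow]
  refine prod_congr rfl fun ζ hζ => ?_
  rw [prod_const, ψ.card_filter_apply_eq_card_div hS hd ht hψ hζ]

end RootsOfUnity

section ZMod

variable {N : ℕ} [NeZero N]

theorem AddChar.orderOf_apply_one {M : Type*} [CommMonoid M] (ψ : AddChar (ZMod N) M) :
    orderOf (ψ 1) = orderOf ψ := by
  refine orderOf_eq_orderOf_iff.2 fun m => ?_
  simp only [AddChar.eq_one_iff, AddChar.pow_apply]
  refine ⟨fun h a => ?_, fun h => h 1⟩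
  rw [← ZMod.natCast_zmod_val a, ← nsmul_one, ψ.map_nsmul_eq_pow, ← pow_mul, mul_comm, pow_mul,
    h, one_pow]

theorem add_natCast_mem_resD_iff {p : ℕ} (hpN : p ∣ N) (a : ZMod N) :
    a + p ∈ resD p N ↔ a ∈ resD p N := by
  simp only [resD, mem_filter, mem_univ, true_and, ZMod.val_add, ZMod.val_natCast, not_iff_not,
    Nat.dvd_mod_iff hpN]
  exact Nat.dvd_add_left ((Nat.dvd_mod_iff hpN).2 dvd_rfl)

theorem ZMod.card_filter_dvd_val {p : ℕ} (hpN : p ∣ N) : #{a : ZMod N | p ∣ a.val} = N / p := by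
  obtain ⟨q, rfl⟩ := hpN
  have hp : 0 < p := Nat.pos_of_ne_zero (left_ne_zero_of_mul (NeZero.ne (p * q)))
  have val_mul : ∀ w < q, ((p * w : ℕ) : ZMod (p * q)).val = p * w := fun w hw =>
    ZMod.val_cast_of_lt (Nat.mul_lt_mul_of_pos_left hw hp)
  rw [Nat.mul_div_cancel_left q hp]
  refine (card_nbij' (fun a => a.val / p) (fun w => ((p * w : ℕ) : ZMod (p * q)))
    (fun a ha => ?_) (fun w hw => ?_) (fun a ha => ?_) (fun w hw => ?_)).trans (card_range q)
  · exact mem_range.2 (Nat.div_lt_of_lt_mul (ZMod.val_lt a))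
  · refine mem_filter.2 ⟨mem_univ _, ?_⟩
    rw [val_mul w (mem_range.1 hw)]
    exact dvd_mul_right p w
  · dsimp only
    rw [Nat.mul_div_cancel' (mem_filter.1 ha).2, ZMod.natCast_zmod_val]
  · dsimp only
    rw [val_mul w (mem_range.1 hw), Nat.mul_div_cancel_left w hp]

theorem card_resD {p : ℕ} (hpN : p ∣ N) : #(resD p N) = N - N / p := by
  rw [resD, filter_not, card_sdiff, inter_eq_left.2 (filter_subset _ _), card_univ, ZMod.card,
    ZMod.card_filter_dvd_val hpN]

end ZMod

theorem prod_resD_one_add_C_mul_X {N p : ℕ} [NeZero N] (hp : p.Prime) (hpN : p ∣ N)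
    (ψ : AddChar (ZMod N) ℂ) (hord : ¬ p ∣ orderOf ψ) :
    ∏ a ∈ resD p N, (1 + C (ψ a) * X) =
      (1 - (-X) ^ orderOf ψ) ^ ((p - 1) * N / (p * orderOf ψ)) := by
  classical
  have hd : 0 < orderOf ψ := orderOf_pos ψ
  have hψ : ∀ a, ψ a ^ orderOf ψ = 1 := fun a => by
    rw [← AddChar.pow_apply, pow_orderOf_eq_one, AddChar.one_apply]
  have hprim : IsPrimitiveRoot (ψ p) (orderOf ψ) := by
    have hcop : (orderOf (ψ 1)).Coprime p := by
      rw [ψ.orderOf_apply_one]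
      exact (hp.coprime_iff_not_dvd.2 hord).symm
    rw [← nsmul_one, ψ.map_nsmul_eq_pow, ← ψ.orderOf_apply_one, ← hcop.orderOf_pow]
    exact IsPrimitiveRoot.orderOf _
  rw [ψ.prod_comp_eq_prod_nthRootsFinset_pow (fun ζ => 1 + C ζ * X)
      (add_natCast_mem_resD_iff hpN) hd hprim hψ, prod_nthRootsFinset_one_add_C_mul_X hprim hd,
    card_resD hpN]
  obtain ⟨q, rfl⟩ := hpN
  rw [Nat.mul_div_cancel_left q hp.pos, ← Nat.sub_one_mul, mul_left_comm,
    Nat.mul_div_mul_left _ _ hp.pos]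

theorem stmt_18_general (p n k : ℕ) (hp : p.Prime) [NeZero (p * (n + 1))]
    (ψ : AddChar (ZMod (p * (n + 1))) ℂ) (hord : ¬ p ∣ orderOf ψ) :
    (∑ x ∈ Finset.univ.filter
        (fun x : Fin k → ZMod (p * (n + 1)) =>
          (∀ i, x i ∈ resD p (p * (n + 1))) ∧ Function.Injective x),
      ∏ i, ψ (x i)) =
    (-1) ^ k * (Nat.factorial k : ℂ) *
      (((1 - Polynomial.X ^ (orderOf ψ)) ^
          ((p - 1) * (p * (n + 1)) / (p * orderOf ψ)) : Polynomial ℂ).coeff k) := by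
  have substitute_neg_X : ∀ d m : ℕ,
      (1 - (-X) ^ d : ℂ[X]) ^ m = ((1 - X ^ d : ℂ[X]) ^ m).comp (-X) := fun d m => by
    simp [sub_comp]
  rw [sum_prod_injective_eq_factorial_mul, ← coeff_prod_one_add_C_mul_X,
    prod_resD_one_add_C_mul_X hp (dvd_mul_right p (n + 1)) ψ hord, substitute_neg_X,
    coeff_comp_neg_X, mul_left_comm, mul_assoc]

theorem stmt_18 (p n k : ℕ) (hp : p.Prime) (hp3 : 3 ≤ p) [NeZero (p * (n + 1))]
    (hk : 1 ≤ k) (ψ : AddChar (ZMod (p * (n + 1))) ℂ) (hord : ¬ p ∣ orderOf ψ) :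
    (∑ x ∈ Finset.univ.filter
        (fun x : Fin k → ZMod (p * (n + 1)) =>
          (∀ i, x i ∈ resD p (p * (n + 1))) ∧ Function.Injective x),
      ∏ i, ψ (x i)) =
    (-1) ^ k * (Nat.factorial k : ℂ) *
      (((1 - Polynomial.X ^ (orderOf ψ)) ^
          ((p - 1) * (p * (n + 1)) / (p * orderOf ψ)) : Polynomial ℂ).coeff k) :=
  stmt_18_general p n k hp ψ hord
end

section
/- Let ψ be a complex-valued additive character of G = ℤ/Nℤ whose order o = o(ψ) is divisible by p (so o | N and N/o is a positive integer), and let k ≥ 1. Then F_ψ(X̄_k) = (−1)^k · k! · [u^k]( (1 − u^{o})/(1 − u^{o/p}) )^{N/o} = (−1)^k · k! · [u^k]( Σ_{j=0}^{p−1} u^{j·o/p} )^{N/o}, where [u^k] denotes the coefficient of u^k in the polynomial (note that (1 − u^{o})/(1 − u^{o/p}) = 1 + u^{o/p} + u^{2o/p} + ⋯ + u^{(p−1)o/p}). -/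
/-!
The sum over injective `k`-tuples from `D` is `k!` times the `k`-th elementary symmetric function
of the values `ψ a`, `a ∈ D`, i.e. `(-1)^k k!` times the coefficient of `u^k` in
`∏_{a ∈ D} (1 - ψ(a) u)`. Since `ψ 1` is a primitive `o`-th root of unity,
`∏_{x ∈ G} (1 - ψ(x) u) = (1 - u^o)^(N/o)`, and since `ψ p` has order `o/p`, the same product over
`pG` is `(1 - u^(o/p))^(N/o)`. Dividing, the product over `D = G \ pG` is
`((1 - u^o) / (1 - u^(o/p)))^(N/o)`.
-/

open Finset

open Polynomial
open scoped Nat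

section InjectiveTuples

variable {α R : Type*} [Fintype α] [DecidableEq α] [CommSemiring R]

theorem card_injective_fin_image_eq_factorial {t : Finset α} {k : ℕ} (ht : #t = k) :
    #{x : Fin k → α | Function.Injective x ∧ univ.image x = t} = k ! := by
  have hmem {x : Fin k → α} (hx : univ.image x = t) (i : Fin k) : x i ∈ t :=
    hx ▸ mem_image_of_mem x (mem_univ i)
  calc #{x : Fin k → α | Function.Injective x ∧ univ.image x = t}
      = Fintype.card (Fin k ↪ t) := by
        refine card_bij'
          (fun x hx => ⟨fun i => ⟨x i, hmem (mem_filter.1 hx).2.2 i⟩,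
            fun i j h => (mem_filter.1 hx).2.1 (congrArg Subtype.val h)⟩)
          (fun e _ => (↑) ∘ e) (fun _ _ => mem_univ _) (fun e _ => ?_)
          (fun _ _ => rfl) (fun _ _ => rfl)
        have he : Function.Injective ((↑) ∘ e : Fin k → α) :=
          Subtype.val_injective.comp e.injective
        refine mem_filter.2 ⟨mem_univ _, he, eq_of_subset_of_card_le ?_ ?_⟩
        · exact image_subset_iff.2 fun i _ => (e i).2
        · rw [card_image_of_injective _ he, card_univ, Fintype.card_fin, ht]
    _ = k ! := by
        rw [Fintype.card_embedding_eq, Fintype.card_coe, ht, Fintype.card_fin,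
          Nat.descFactorial_self]

theorem sum_prod_injective_fin_eq_factorial_mul (s : Finset α) (f : α → R) (k : ℕ) :
    ∑ x ∈ univ.filter (fun x : Fin k → α => (∀ i, x i ∈ s) ∧ Function.Injective x),
      ∏ i, f (x i) = k ! * ∑ t ∈ s.powersetCard k, ∏ a ∈ t, f a := by
  rw [← sum_fiberwise_of_maps_to (g := fun x => univ.image x) (t := s.powersetCard k), mul_sum]
  · refine sum_congr rfl fun t ht => ?_
    obtain ⟨hts, htk⟩ := mem_powersetCard.1 ht
    have hfiber : (univ.filter (fun x : Fin k → α => (∀ i, x i ∈ s) ∧ Function.Injective x)).filter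
        (fun x => univ.image x = t) = univ.filter (fun x : Fin k → α =>
          Function.Injective x ∧ univ.image x = t) := by
      ext x
      simp only [mem_filter, mem_univ, true_and]
      refine ⟨fun h => ⟨h.1.2, h.2⟩, fun h => ⟨⟨fun i => hts ?_, h.1⟩, h.2⟩⟩
      exact h.2 ▸ mem_image_of_mem x (mem_univ i)
    rw [hfiber, sum_congr rfl fun x hx => (mem_filter.1 hx).2.2 ▸
        (prod_image fun i _ j _ h => (mem_filter.1 hx).2.1 h).symm,
      sum_const, card_injective_fin_image_eq_factorial htk, nsmul_eq_mul]
  · intro x hx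
    obtain ⟨hxs, hinj⟩ := (mem_filter.1 hx).2
    refine mem_powersetCard.2 ⟨image_subset_iff.2 fun i _ => hxs i, ?_⟩
    rw [card_image_of_injective _ hinj, card_univ, Fintype.card_fin]

end InjectiveTuples

theorem Polynomial.coeff_prod_one_sub_C_mul_X {ι R : Type*} [CommRing R] (s : Finset ι)
    (f : ι → R) (k : ℕ) :
    (∏ a ∈ s, (1 - C (f a) * X)).coeff k = (-1) ^ k * ∑ t ∈ s.powersetCard k, ∏ a ∈ t, f a := by
  classical
  have hfactor (a : ι) : (1 - C (f a) * X : R[X]) = C (-f a) * X + 1 := by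
    rw [map_neg]; ring
  simp_rw [hfactor, prod_add, prod_const_one, mul_one, prod_mul_distrib, prod_const, ← map_prod,
    finsetSum_coeff, coeff_C_mul_X_pow, powersetCard_eq_filter, sum_filter, mul_sum]
  refine sum_congr rfl fun t _ => ?_
  by_cases h : #t = k
  · rw [if_pos h.symm, if_pos h, prod_neg, h]
  · rw [if_neg (Ne.symm h), if_neg h, mul_zero]

namespace IsPrimitiveRoot

variable {R : Type*} [CommRing R] [IsDomain R] {ζ : R} {m : ℕ}

theorem prod_nthRootsFinset_one {M : Type*} [CommMonoid M] (hζ : IsPrimitiveRoot ζ m)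
    (f : R → M) : ∏ μ ∈ nthRootsFinset m (1 : R), f μ = ∏ t ∈ range m, f (ζ ^ t) := by
  classical
  rw [← prod_image hζ.injOn_pow, nthRootsFinset_def, hζ.nthRoots_eq (one_pow m)]
  simp [Finset.image]

theorem prod_range_one_sub_C_pow_mul_X (hζ : IsPrimitiveRoot ζ m) (hm : 0 < m) :
    ∏ t ∈ range m, (1 - C (ζ ^ t) * X) = 1 - X ^ m := by
  have hCζ : IsPrimitiveRoot (C ζ) m := hζ.map_of_injective C_injective
  rw [← one_pow m, hCζ.pow_sub_pow_eq_prod_sub_mul 1 X hm, hCζ.prod_nthRootsFinset_one]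
  simp_rw [one_pow, map_pow]

theorem prod_range_mul_one_sub_C_pow_mul_X (hζ : IsPrimitiveRoot ζ m) (hm : 0 < m) (c : ℕ) :
    ∏ t ∈ range (m * c), (1 - C (ζ ^ t) * X) = (1 - X ^ m) ^ c := by
  induction c with
  | zero => simp
  | succ c ih =>
    rw [Nat.mul_succ, prod_range_add, ih, pow_succ, ← hζ.prod_range_one_sub_C_pow_mul_X hm]
    simp_rw [pow_add, pow_mul, hζ.pow_eq_one, one_pow, one_mul]

end IsPrimitiveRoot

theorem ZMod.prod_filter_dvd_val {M : Type*} [CommMonoid M] {N d e : ℕ} [NeZero N]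
    (hde : d * e = N) (f : ZMod N → M) :
    ∏ x ∈ univ.filter (fun x : ZMod N => d ∣ x.val), f x =
      ∏ t ∈ range e, f ((d * t : ℕ) : ZMod N) := by
  have hd : 0 < d := Nat.pos_of_ne_zero fun h => NeZero.ne N (by rw [← hde, h, zero_mul])
  refine prod_nbij' (fun x => x.val / d) (fun t => ((d * t : ℕ) : ZMod N)) ?_ ?_ ?_ ?_ ?_
  · intro x _
    exact mem_range.2 (Nat.div_lt_of_lt_mul ((ZMod.val_lt x).trans_eq hde.symm))
  · intro t _
    rw [mem_filter, ZMod.val_natCast]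
    exact ⟨mem_univ _, (Nat.dvd_mod_iff ⟨e, hde.symm⟩).2 (dvd_mul_right d t)⟩
  · intro x hx
    rw [Nat.mul_div_cancel' (mem_filter.1 hx).2, ZMod.natCast_zmod_val]
  · intro t ht
    have hlt : d * t < N := hde ▸ Nat.mul_lt_mul_of_pos_left (mem_range.1 ht) hd
    rw [ZMod.val_cast_of_lt hlt, Nat.mul_div_cancel_left t hd]
  · intro x hx
    rw [Nat.mul_div_cancel' (mem_filter.1 hx).2, ZMod.natCast_zmod_val]

namespace AddChar

theorem map_natCast_eq_pow {A M : Type*} [AddMonoidWithOne A] [Monoid M] (ψ : AddChar A M)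
    (n : ℕ) : ψ n = ψ 1 ^ n := by
  rw [← map_nsmul_eq_pow, nsmul_one]

variable {N : ℕ} [NeZero N] {M : Type*} [CommMonoid M]

theorem zmod_apply_eq_pow_val (ψ : AddChar (ZMod N) M) (x : ZMod N) : ψ x = ψ 1 ^ x.val := by
  rw [← ψ.map_natCast_eq_pow, ZMod.natCast_zmod_val]

theorem orderOf_zmod_eq_orderOf_apply_one (ψ : AddChar (ZMod N) M) : orderOf ψ = orderOf (ψ 1) :=
  orderOf_eq_orderOf_iff.2 fun j => ⟨fun h => by simpa using congr($h 1), fun h => by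
    ext x; rw [pow_apply, zmod_apply_eq_pow_val, ← pow_mul, mul_comm, pow_mul, h, one_pow,
      one_apply]⟩

theorem orderOf_zmod_dvd (ψ : AddChar (ZMod N) M) : orderOf ψ ∣ N := by
  rw [orderOf_zmod_eq_orderOf_apply_one]
  refine orderOf_dvd_of_pow_eq_one ?_
  rw [← map_natCast_eq_pow, ZMod.natCast_self, map_zero_eq_one]

theorem prod_filter_dvd_val_one_sub_C_mul_X {R : Type*} [CommRing R] [IsDomain R]
    (ψ : AddChar (ZMod N) R) {d : ℕ} (hd : d ∣ orderOf ψ) :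
    ∏ x ∈ univ.filter (fun x : ZMod N => d ∣ x.val), (1 - C (ψ x) * X) =
      (1 - X ^ (orderOf ψ / d)) ^ (N / orderOf ψ) := by
  obtain ⟨c, hc⟩ := ψ.orderOf_zmod_dvd
  obtain ⟨a, ha⟩ := hd
  have hψ1 : IsPrimitiveRoot (ψ 1) (orderOf ψ) :=
    ψ.orderOf_zmod_eq_orderOf_apply_one ▸ IsPrimitiveRoot.orderOf (ψ 1)
  have ho : 0 < orderOf ψ := Nat.pos_of_dvd_of_pos ⟨c, hc⟩ (NeZero.pos N)
  have hd : 0 < d := Nat.pos_of_mul_pos_right (ha ▸ ho)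
  have ha' : 0 < a := Nat.pos_of_mul_pos_left (ha ▸ ho)
  have hq : orderOf ψ / d = a := by rw [ha, Nat.mul_div_cancel_left a hd]
  have hc' : N / orderOf ψ = c := Nat.div_eq_of_eq_mul_right ho hc
  rw [ZMod.prod_filter_dvd_val (e := a * c) (by rw [← mul_assoc, ← ha]; exact hc.symm), hq, hc']
  simp_rw [map_natCast_eq_pow, pow_mul]
  exact (hq ▸ hψ1.pow_of_dvd hd.ne' ⟨a, ha⟩).prod_range_mul_one_sub_C_pow_mul_X ha' c

theorem prod_resD_one_sub_C_mul_X {R : Type*} [CommRing R] [IsDomain R]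
    (ψ : AddChar (ZMod N) R) {p : ℕ} (hp : p ∣ orderOf ψ) :
    ∏ x ∈ resD p N, (1 - C (ψ x) * X) =
      (∑ j ∈ range p, X ^ (j * (orderOf ψ / p))) ^ (N / orderOf ψ) := by
  set o := orderOf ψ
  set q := o / p
  have ho : 0 < o := Nat.pos_of_dvd_of_pos ψ.orderOf_zmod_dvd (NeZero.pos N)
  have hq : 0 < q := Nat.div_pos (Nat.le_of_dvd ho hp) (Nat.pos_of_dvd_of_pos hp ho)
  have hXq : (1 - X ^ q : R[X]) ≠ 0 := by
    rw [← neg_sub, ← C_1]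
    exact neg_ne_zero.2 (X_pow_sub_C_ne_zero hq 1)
  have hgeom : (1 - X ^ o : R[X]) = (1 - X ^ q) * ∑ j ∈ range p, X ^ (j * q) := by
    simp_rw [pow_mul']
    rw [mul_neg_geom_sum, ← pow_mul, Nat.div_mul_cancel hp]
  have hpG : ∏ x ∈ univ.filter (fun x : ZMod N => p ∣ x.val), (1 - C (ψ x) * X) =
      (1 - X ^ q) ^ (N / o) := ψ.prod_filter_dvd_val_one_sub_C_mul_X hp
  have hG : ∏ x, (1 - C (ψ x) * X) = (1 - X ^ o) ^ (N / o) := by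
    simpa only [one_dvd, filter_true, Nat.div_one] using
      ψ.prod_filter_dvd_val_one_sub_C_mul_X (one_dvd o)
  refine mul_left_cancel₀ (pow_ne_zero (N / o) hXq) ?_
  rw [← hpG, resD, prod_filter_mul_prod_filter_not, hG, hgeom, mul_pow, hpG]

end AddChar

theorem sum_prod_injective_resD_eq_coeff {R : Type*} [CommRing R] [IsDomain R] (p N k : ℕ)
    [NeZero N] (ψ : AddChar (ZMod N) R) (hp : p ∣ orderOf ψ) :
    (∑ x ∈ Finset.univ.filter
        (fun x : Fin k → ZMod N => (∀ i, x i ∈ resD p N) ∧ Function.Injective x),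
      ∏ i, ψ (x i)) =
    (-1) ^ k * (k ! : R) *
      ((∑ j ∈ range p, X ^ (j * (orderOf ψ / p))) ^ (N / orderOf ψ) : R[X]).coeff k := by
  rw [sum_prod_injective_fin_eq_factorial_mul, ← ψ.prod_resD_one_sub_C_mul_X hp,
    coeff_prod_one_sub_C_mul_X, mul_mul_mul_comm, ← mul_pow, neg_one_mul, neg_neg, one_pow,
    one_mul]

theorem stmt_19_general (p n k : ℕ) [NeZero (p * (n + 1))]
    (ψ : AddChar (ZMod (p * (n + 1))) ℂ) (hord : p ∣ orderOf ψ) :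
    (∑ x ∈ Finset.univ.filter
        (fun x : Fin k → ZMod (p * (n + 1)) =>
          (∀ i, x i ∈ resD p (p * (n + 1))) ∧ Function.Injective x),
      ∏ i, ψ (x i)) =
    (-1) ^ k * (Nat.factorial k : ℂ) *
      (((∑ j ∈ Finset.range p, Polynomial.X ^ (j * (orderOf ψ / p))) ^
          (p * (n + 1) / orderOf ψ) : Polynomial ℂ).coeff k) :=
  sum_prod_injective_resD_eq_coeff p (p * (n + 1)) k ψ hord

theorem stmt_19 (p n k : ℕ) (hp : p.Prime) (hp3 : 3 ≤ p) [NeZero (p * (n + 1))]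
    (hk : 1 ≤ k) (ψ : AddChar (ZMod (p * (n + 1))) ℂ) (hord : p ∣ orderOf ψ) :
    (∑ x ∈ Finset.univ.filter
        (fun x : Fin k → ZMod (p * (n + 1)) =>
          (∀ i, x i ∈ resD p (p * (n + 1))) ∧ Function.Injective x),
      ∏ i, ψ (x i)) =
    (-1) ^ k * (Nat.factorial k : ℂ) *
      (((∑ j ∈ Finset.range p, Polynomial.X ^ (j * (orderOf ψ / p))) ^
          (p * (n + 1) / orderOf ψ) : Polynomial ℂ).coeff k) :=
  stmt_19_general p n k ψ hord
end
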